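/- arXiv:1001.0157 — 5 statements merged into one kernel-verified Lean document; each statement's English description precedes it below -/
import Mathlib

section
/- Let L/k be a finite Galois extension of fields with Galois group G, and let V be an L-vector space equipped with a G-semilinear action (i.e., an action of G on V by k-linear maps such that g(x·v) = g(x)·g(v) for all g ∈ G, x ∈ L, v ∈ V). Then the natural map L ⊗_k V^G → V, given by x ⊗ v ↦ x·v, is an isomorphism of L-vector spaces, where V^G denotes the k-subspace of G-invariant elements. -/
open TensorProduct

/-! Since the automorphisms of `L` are `L`-linearly independent, there are `cᵢ, xᵢ ∈ L` with
`∑ᵢ cᵢ g(xᵢ) = δ_{g,1}` for all `g ∈ G` (a `k`-basis `xᵢ` of `L` and its trace-dual basis `cᵢ`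
will do). With `N = ∑_g g : V → V^G`, the map `v ↦ ∑ᵢ cᵢ ⊗ N(xᵢ v)` inverts `x ⊗ w ↦ x • w`:
on one side `∑ᵢ cᵢ N(xᵢ v) = ∑_g (∑ᵢ cᵢ g(xᵢ)) g(v) = v`; on the other, `N(y w) = Tr(y) w` for
invariant `w`, and `∑ᵢ Tr(xᵢ a) cᵢ = ∑_g (∑ᵢ cᵢ g(xᵢ)) g(a) = a`. -/

/-- The natural map `L ⊗ₖ W → V`, `x ⊗ w ↦ x • w`, for a `k`-submodule `W` of the
`L`-vector space `V`. -/
noncomputable def speiserMap (k L V : Type*) [Field k] [Field L] [Algebra k L]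
    [AddCommGroup V] [Module k V] [Module L V] [IsScalarTower k L V]
    (W : Submodule k V) : L ⊗[k] W →ₗ[k] V :=
  TensorProduct.lift (LinearMap.mk₂ k (fun (x : L) (w : W) => x • (w : V))
    (fun a b w => add_smul a b (w : V))
    (fun c a w => smul_assoc c a (w : V))
    (fun a w₁ w₂ => by simp [smul_add])
    (fun c a w => by show a • ((c • w : W) : V) = c • (a • (w : V)); rw [Submodule.coe_smul]; exact smul_comm a c (w : V) |>.symm ▸ (smul_comm c a (w:V)).symm))

theorem IsGalois.exists_sum_mul_eq_one_and_sum_mul_apply_eq_zero (k L : Type*) [Field k]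
    [Field L] [Algebra k L] [FiniteDimensional k L] [IsGalois k L] :
    ∃ (n : ℕ) (c x : Fin n → L), ∑ i, c i * x i = 1 ∧
      ∀ g : L ≃ₐ[k] L, g ≠ 1 → ∑ i, c i * g (x i) = 0 := by
  classical
  let b := Module.finBasis k L
  let b' := (Algebra.traceForm k L).dualBasis (traceForm_nondegenerate k L) b
  let e : (L ≃ₐ[k] L) → L := fun g => ∑ i, b' i * g (b i) - if g = 1 then 1 else 0
  have expand (y : L) : ∑ g : L ≃ₐ[k] L, (∑ i, b' i * g (b i)) * g y = y := by
    calc ∑ g : L ≃ₐ[k] L, (∑ i, b' i * g (b i)) * g y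
        = ∑ i, algebraMap k L (Algebra.trace k L (y * b i)) * b' i := by
          simp only [trace_eq_sum_automorphisms, map_mul, Finset.sum_mul]
          rw [Finset.sum_comm]
          exact Finset.sum_congr rfl fun _ _ => Finset.sum_congr rfl fun _ _ => by ring
      _ = y := by
          conv_rhs => rw [← b'.sum_repr y]
          simp [b', Algebra.smul_def]
  have he : ∀ g, e g = 0 := by
    refine Fintype.linearIndependent_iff.mp
      ((linearIndependent_toLinearMap k L L).comp _ AlgEquiv.coe_toAlgHom_injective) e ?_
    ext y
    simp [e, sub_smul, Finset.sum_sub_distrib, expand]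
  refine ⟨_, b', b, ?_, fun g hg => ?_⟩
  · simpa [e] using sub_eq_zero.mp (he 1)
  · simpa [e, hg] using he g

section

variable {k L V : Type*} [Field k] [Field L] [Algebra k L]

theorem sum_trace_mul_smul_eq [FiniteDimensional k L] [IsGalois k L]
    {ι : Type*} [Fintype ι] {c x : ι → L} (hcx₁ : ∑ i, c i * x i = 1)
    (hcx : ∀ g : L ≃ₐ[k] L, g ≠ 1 → ∑ i, c i * g (x i) = 0) (a : L) :
    ∑ i, Algebra.trace k L (x i * a) • c i = a := by
  simp only [Algebra.smul_def, trace_eq_sum_automorphisms, map_mul, mul_comm _ (c _),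
    Finset.mul_sum]
  rw [Finset.sum_comm, Finset.sum_eq_single 1]
  · simp [← mul_assoc, ← Finset.sum_mul, hcx₁]
  · intro g _ hg
    simp [← mul_assoc, ← Finset.sum_mul, hcx g hg]
  · simp

variable [AddCommGroup V] [Module k V] [Module L V] [IsScalarTower k L V]

@[simp]
theorem speiserMap_tmul (W : Submodule k V) (a : L) (w : W) :
    speiserMap k L V W (a ⊗ₜ w) = a • (w : V) := rfl

theorem speiserMap_smul (W : Submodule k V) (a : L) (z : L ⊗[k] W) :
    speiserMap k L V W (a • z) = a • speiserMap k L V W z := by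
  induction z using TensorProduct.induction_on with
  | zero => simp
  | tmul b w => simp [TensorProduct.smul_tmul', mul_smul]
  | add z₁ z₂ h₁ h₂ => simp [h₁, h₂]

namespace Representation

theorem norm_apply_mem_invariants {G : Type*} [Group G] [Fintype G] (ρ : Representation k G V)
    (v : V) : ρ.norm v ∈ ρ.invariants := fun g =>
  LinearMap.congr_fun (ρ.self_comp_norm g) v

variable [FiniteDimensional k L] (ρ : Representation k (L ≃ₐ[k] L) V)

theorem norm_smul_of_mem_invariants [IsGalois k L]
    (hρ : ∀ (g : L ≃ₐ[k] L) (x : L) (v : V), ρ g (x • v) = g x • ρ g v)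
    (y : L) {w : V} (hw : w ∈ ρ.invariants) :
    ρ.norm (y • w) = Algebra.trace k L y • w := by
  simp [norm, hρ, (ρ.mem_invariants w).mp hw, ← Finset.sum_smul,
    ← trace_eq_sum_automorphisms, algebraMap_smul]

variable {ι : Type*} [Fintype ι]

noncomputable def speiserInv (c x : ι → L) : V →ₗ[k] L ⊗[k] ρ.invariants :=
  ∑ i, TensorProduct.mk k L ρ.invariants (c i) ∘ₗ
    ρ.norm.codRestrict ρ.invariants ρ.norm_apply_mem_invariants ∘ₗ
    (x i • LinearMap.id)

theorem speiserInv_apply (c x : ι → L) (v : V) :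
    ρ.speiserInv c x v = ∑ i, c i ⊗ₜ ⟨ρ.norm (x i • v), ρ.norm_apply_mem_invariants _⟩ := by
  simp only [speiserInv, LinearMap.comp_codRestrict, LinearMap.coe_sum, LinearMap.coe_comp,
    Finset.sum_apply, Function.comp_apply, mk_apply]
  rfl

theorem speiserMap_speiserInv
    (hρ : ∀ (g : L ≃ₐ[k] L) (x : L) (v : V), ρ g (x • v) = g x • ρ g v)
    {c x : ι → L} (hcx₁ : ∑ i, c i * x i = 1)
    (hcx : ∀ g : L ≃ₐ[k] L, g ≠ 1 → ∑ i, c i * g (x i) = 0) (v : V) :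
    speiserMap k L V ρ.invariants (ρ.speiserInv c x v) = v := by
  simp only [speiserInv_apply, map_sum, speiserMap_tmul]
  calc ∑ i, c i • ρ.norm (x i • v)
      = ∑ g, (∑ i, c i * g (x i)) • ρ g v := by
        simp only [norm, LinearMap.coe_sum, Finset.sum_apply, hρ, Finset.smul_sum, smul_smul,
          Finset.sum_smul]
        exact Finset.sum_comm
    _ = v := by
        rw [Finset.sum_eq_single 1 (fun g _ hg => by rw [hcx g hg, zero_smul])
          (fun h => absurd (Finset.mem_univ 1) h)]
        simp [hcx₁]

theorem speiserInv_speiserMap [IsGalois k L]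
    (hρ : ∀ (g : L ≃ₐ[k] L) (x : L) (v : V), ρ g (x • v) = g x • ρ g v)
    {c x : ι → L} (hcx₁ : ∑ i, c i * x i = 1)
    (hcx : ∀ g : L ≃ₐ[k] L, g ≠ 1 → ∑ i, c i * g (x i) = 0) (z : L ⊗[k] ρ.invariants) :
    ρ.speiserInv c x (speiserMap k L V ρ.invariants z) = z := by
  suffices ρ.speiserInv c x ∘ₗ speiserMap k L V ρ.invariants = LinearMap.id from
    LinearMap.congr_fun this z
  refine TensorProduct.ext' fun a w => ?_
  have hnorm (i : ι) :
      (⟨ρ.norm (x i • a • (w : V)), ρ.norm_apply_mem_invariants _⟩ : ρ.invariants) =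
        Algebra.trace k L (x i * a) • w :=
    Subtype.ext <|
      (congrArg ρ.norm (smul_smul _ _ _)).trans (ρ.norm_smul_of_mem_invariants hρ _ w.2)
  simp only [LinearMap.comp_apply, speiserMap_tmul, speiserInv_apply, hnorm, ← smul_tmul,
    ← sum_tmul, sum_trace_mul_smul_eq hcx₁ hcx, LinearMap.id_apply]

end Representation
end

/-- Speiser's Lemma: if `L/k` is a finite Galois extension with Galois group
`G = L ≃ₐ[k] L`, and `V` is an `L`-vector space with a `G`-semilinear action `σ`,
then the natural map `L ⊗ₖ V^G → V` is an isomorphism of `L`-vector spaces. -/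
theorem speiser_lemma (k L : Type*) [Field k] [Field L] [Algebra k L]
    [FiniteDimensional k L] [IsGalois k L]
    (V : Type*) [AddCommGroup V] [Module k V] [Module L V] [IsScalarTower k L V]
    (σ : (L ≃ₐ[k] L) → V →ₗ[k] V)
    (hone : σ 1 = LinearMap.id)
    (hcomp : ∀ g h : L ≃ₐ[k] L, σ (g * h) = σ g ∘ₗ σ h)
    (hsemi : ∀ (g : L ≃ₐ[k] L) (x : L) (v : V), σ g (x • v) = g x • σ g v)
    (W : Submodule k V) (hW : ∀ v : V, v ∈ W ↔ ∀ g : L ≃ₐ[k] L, σ g v = v) :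
    Function.Bijective (speiserMap k L V W) ∧
      ∀ (x : L) (z : L ⊗[k] W), speiserMap k L V W (x • z) = x • speiserMap k L V W z := by
  let ρ : Representation k (L ≃ₐ[k] L) V := ⟨⟨σ, hone⟩, hcomp⟩
  obtain rfl : W = ρ.invariants := Submodule.ext hW
  obtain ⟨n, c, x, hcx₁, hcx⟩ := IsGalois.exists_sum_mul_eq_one_and_sum_mul_apply_eq_zero k L
  exact ⟨⟨Function.LeftInverse.injective (ρ.speiserInv_speiserMap hsemi hcx₁ hcx),
    Function.RightInverse.surjective (ρ.speiserMap_speiserInv hsemi hcx₁ hcx)⟩, speiserMap_smul _⟩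
end

section
/- Let L/k be a finite Galois extension with Galois group G, T a finite group with G-action φ : G → Aut(T), and let t_1, …, t_m be representatives of the G-orbits on T. Then the map from the direct sum of fields ⊕_{i=1}^m L^{Stab(t_i)} to (L[T])^G, sending x ∈ L^{Stab(t_i)} to Σ_{g ∈ G/Stab(t_i)} g(x) e_{φ(g)(t_i)}, is a well-defined isomorphism of k-algebras. -/
/-- The semilinear action `g • f = fun t => g (f ((φ g)⁻¹ t))` on `L[T]`. -/
noncomputable def galFunctionAction {k L : Type*} [Field k] [Field L] [Algebra k L]
    {T : Type*} [Group T] (φ : (L ≃ₐ[k] L) →* MulAut T)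
    (g : L ≃ₐ[k] L) (f : T → L) : T → L :=
  fun t => g (f ((φ g)⁻¹ t))

/-- The stabilizer of `t ∈ T` in the Galois group, with respect to the action `φ`. -/
def galStabilizer {k L : Type*} [Field k] [Field L] [Algebra k L]
    {T : Type*} [Group T] (φ : (L ≃ₐ[k] L) →* MulAut T) (t : T) :
    Subgroup (L ≃ₐ[k] L) where
  carrier := {g | φ g t = t}
  one_mem' := by simp
  mul_mem' := by
    intro a b ha hb
    simp only [Set.mem_setOf_eq, map_mul, MulAut.mul_apply] at *
    rw [hb, ha]
  inv_mem' := by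
    intro a ha
    simp only [Set.mem_setOf_eq, map_inv] at *
    exact (MulEquiv.symm_apply_eq (φ a)).2 ha.symm

/-!
An invariant function `a : T → L` satisfies `a (φ g s) = g (a s)`, so it is determined by its
values at the orbit representatives `tᵢ`, and `a (tᵢ)` is fixed by `Stab(tᵢ)`. Conversely, given
`xᵢ ∈ L^{Stab(tᵢ)}`, the value `g (xᵢ)` at `φ g (tᵢ)` does not depend on the choice of `g`, so
choosing for each `s ∈ T` some `(i, g)` with `φ g (tᵢ) = s` defines an invariant function. Being
built pointwise from the `k`-algebra maps `x ↦ g (xᵢ)`, this assignment is a `k`-algebra map.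
-/

open IntermediateField

section InducedAlgHom

variable {k L T ι : Type*} [Field k] [Field L] [Algebra k L] [Group T]
  (φ : (L ≃ₐ[k] L) →* MulAut T)

theorem mem_galStabilizer_iff {g : L ≃ₐ[k] L} {s : T} :
    g ∈ galStabilizer φ s ↔ φ g s = s := Iff.rfl

theorem galFunctionAction_eq_self_iff {g : L ≃ₐ[k] L} {a : T → L} :
    galFunctionAction φ g a = a ↔ ∀ s, a (φ g s) = g (a s) := by
  rw [funext_iff]
  refine ⟨fun h s => ?_, fun h s => ?_⟩
  · simpa [galFunctionAction] using (h (φ g s)).symm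
  · simpa [galFunctionAction] using (h ((φ g)⁻¹ s)).symm

theorem apply_eq_apply_of_mem_fixedField_galStabilizer {s : T} {x : L}
    (hx : x ∈ fixedField (galStabilizer φ s)) {g g' : L ≃ₐ[k] L} (h : φ g s = φ g' s) :
    g x = g' x := by
  have hstab : g'⁻¹ * g ∈ galStabilizer φ s := by
    rw [mem_galStabilizer_iff, map_mul, MulAut.mul_apply, h, map_inv, MulAut.inv_apply,
      MulEquiv.symm_apply_apply]
  calc g x = g' ((g'⁻¹ * g) x) := by rw [← AlgEquiv.mul_apply, mul_inv_cancel_left]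
    _ = g' x := by rw [(mem_fixedField_iff _ x).1 hx _ hstab]

theorem apply_mem_fixedField_galStabilizer {a : T → L}
    (ha : ∀ g, galFunctionAction φ g a = a) (s : T) :
    a s ∈ fixedField (galStabilizer φ s) := by
  rw [mem_fixedField_iff]
  intro g hg
  rw [← (galFunctionAction_eq_self_iff φ).1 (ha g) s, (mem_galStabilizer_iff φ).1 hg]

noncomputable def inducedAlgHom (t : ι → T) (rep : T → ι × (L ≃ₐ[k] L)) :
    (Π i, fixedField (galStabilizer φ (t i))) →ₐ[k] (T → L) :=
  AlgHom.pi fun s =>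
    ((rep s).2 : L →ₐ[k] L).comp ((fixedField _).val.comp (Pi.evalAlgHom k _ (rep s).1))

variable {φ} {t : ι → T} {rep : T → ι × (L ≃ₐ[k] L)}

theorem inducedAlgHom_apply_of_apply_eq (hrep : ∀ s, φ (rep s).2 (t (rep s).1) = s)
    (hdisj : ∀ i j g g', φ g (t i) = φ g' (t j) → i = j)
    (x : Π i, fixedField (galStabilizer φ (t i)))
    {i : ι} {g : L ≃ₐ[k] L} {s : T} (hs : φ g (t i) = s) :
    inducedAlgHom φ t rep x s = g (x i) := by
  obtain rfl := hdisj _ _ _ _ (hs.trans (hrep s).symm)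
  exact apply_eq_apply_of_mem_fixedField_galStabilizer φ (x _).2 ((hrep s).trans hs.symm)

theorem inducedAlgHom_apply_self (hrep : ∀ s, φ (rep s).2 (t (rep s).1) = s)
    (hdisj : ∀ i j g g', φ g (t i) = φ g' (t j) → i = j)
    (x : Π i, fixedField (galStabilizer φ (t i))) (i : ι) :
    inducedAlgHom φ t rep x (t i) = x i := by
  simpa using inducedAlgHom_apply_of_apply_eq hrep hdisj x (g := 1) (by simp)

theorem inducedAlgHom_injective (hrep : ∀ s, φ (rep s).2 (t (rep s).1) = s)
    (hdisj : ∀ i j g g', φ g (t i) = φ g' (t j) → i = j) :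
    Function.Injective (inducedAlgHom φ t rep) := by
  intro x y hxy
  funext i
  apply Subtype.ext
  rw [← inducedAlgHom_apply_self hrep hdisj, ← inducedAlgHom_apply_self hrep hdisj, hxy]

theorem galFunctionAction_inducedAlgHom (hrep : ∀ s, φ (rep s).2 (t (rep s).1) = s)
    (hdisj : ∀ i j g g', φ g (t i) = φ g' (t j) → i = j)
    (x : Π i, fixedField (galStabilizer φ (t i))) (g : L ≃ₐ[k] L) :
    galFunctionAction φ g (inducedAlgHom φ t rep x) = inducedAlgHom φ t rep x := by
  rw [galFunctionAction_eq_self_iff]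
  intro s
  have hgs : φ (g * (rep s).2) (t (rep s).1) = φ g s := by
    rw [map_mul, MulAut.mul_apply, hrep]
  rw [inducedAlgHom_apply_of_apply_eq hrep hdisj x hgs,
    inducedAlgHom_apply_of_apply_eq hrep hdisj x (hrep s), AlgEquiv.mul_apply]

theorem mem_range_inducedAlgHom_iff (hrep : ∀ s, φ (rep s).2 (t (rep s).1) = s)
    (hdisj : ∀ i j g g', φ g (t i) = φ g' (t j) → i = j) {a : T → L} :
    a ∈ Set.range (inducedAlgHom φ t rep) ↔ ∀ g, galFunctionAction φ g a = a := by
  refine ⟨?_, fun ha => ⟨fun i => ⟨a (t i), apply_mem_fixedField_galStabilizer φ ha (t i)⟩, ?_⟩⟩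
  · rintro ⟨x, rfl⟩ g
    exact galFunctionAction_inducedAlgHom hrep hdisj x g
  · funext s
    have hinv := (galFunctionAction_eq_self_iff φ).1 (ha (rep s).2) (t (rep s).1)
    rw [hrep] at hinv
    exact (inducedAlgHom_apply_of_apply_eq hrep hdisj _ (hrep s)).trans hinv.symm

end InducedAlgHom

theorem fixed_fields_iso_invariants_general (k L : Type*) [Field k] [Field L] [Algebra k L]
    (T : Type*) [Group T] (φ : (L ≃ₐ[k] L) →* MulAut T)
    (m : ℕ) (t : Fin m → T)
    (hreps : ∀ s : T, ∃! i : Fin m, ∃ g : L ≃ₐ[k] L, φ g (t i) = s) :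
    ∃ Φ : (Π i : Fin m, IntermediateField.fixedField (galStabilizer φ (t i))) →ₐ[k] (T → L),
      Function.Injective Φ ∧
      (∀ a : T → L, a ∈ Set.range Φ ↔ ∀ g : L ≃ₐ[k] L, galFunctionAction φ g a = a) ∧
      (∀ (i j : Fin m) (x : IntermediateField.fixedField (galStabilizer φ (t i)))
        (g : L ≃ₐ[k] L),
        Φ (Pi.single i x) (φ g (t j)) = if j = i then g (x : L) else 0) := by
  choose idx elt hrep using fun s => (hreps s).exists
  have hdisj : ∀ i j g g', φ g (t i) = φ g' (t j) → i = j := fun i j g g' h =>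
    (hreps _).unique ⟨g, rfl⟩ ⟨g', h.symm⟩
  refine ⟨inducedAlgHom φ t (fun s => (idx s, elt s)), inducedAlgHom_injective hrep hdisj,
    fun a => mem_range_inducedAlgHom_iff hrep hdisj, fun i j x g => ?_⟩
  rw [inducedAlgHom_apply_of_apply_eq hrep hdisj _ rfl]
  by_cases hji : j = i
  · subst hji
    simp
  · simp [hji]

/-- Let `L/k` be finite Galois with group `G`, `T` a finite group with `G`-action
`φ : G → Aut T`, and `t 0, …, t (m-1)` representatives of the `G`-orbits on `T`. Then
the map `⊕ᵢ L^{Stab(tᵢ)} → (L[T])^G`, sending `x` in the `i`-th fixed field to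
`Σ_{g ∈ G/Stab(tᵢ)} g(x) e_{φ(g)(tᵢ)}`, is a well-defined isomorphism of `k`-algebras
onto the invariant algebra. -/
theorem fixed_fields_iso_invariants (k L : Type*) [Field k] [Field L] [Algebra k L]
    [FiniteDimensional k L] [IsGalois k L]
    (T : Type*) [Group T] [Fintype T] (φ : (L ≃ₐ[k] L) →* MulAut T)
    (m : ℕ) (t : Fin m → T)
    (hreps : ∀ s : T, ∃! i : Fin m, ∃ g : L ≃ₐ[k] L, φ g (t i) = s) :
    ∃ Φ : (Π i : Fin m, IntermediateField.fixedField (galStabilizer φ (t i))) →ₐ[k] (T → L),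
      Function.Injective Φ ∧
      (∀ a : T → L, a ∈ Set.range Φ ↔ ∀ g : L ≃ₐ[k] L, galFunctionAction φ g a = a) ∧
      (∀ (i j : Fin m) (x : IntermediateField.fixedField (galStabilizer φ (t i)))
        (g : L ≃ₐ[k] L),
        Φ (Pi.single i x) (φ g (t j)) = if j = i then g (x : L) else 0) :=
  fixed_fields_iso_invariants_general k L T φ m t hreps
end

section
/- Let k be a field, N and T finite groups with an action ψ : N → Aut(T), and let k[T] ⋊ kN be the smash product algebra with product (e_{t_1} ⊗ n_1)(e_{t_2} ⊗ n_2) = δ_{t_1, ψ(n_1)(t_2)} e_{t_1} ⊗ n_1 n_2. If the characteristic of k does not divide |N|, then k[T] ⋊ kN is a semisimple k-algebra. -/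
/-!
The elements `∑ₜ f t • e_{t,1}` (for `f : T → k`) form a copy `A` of the semisimple ring `k^T`,
and the elements `uₙ = ∑ₜ e_{t,n}` form a group of units normalizing `A`; together they
generate `R`, since `e_{t,n} = e_{t,1} uₙ`. Given a submodule `V` of an `R`-module, take an
`A`-linear projection onto `V` and average its conjugates by the `uₙ`: because `|N|` is
invertible, the average is again a projection onto `V`, and it commutes with `A` and with every
`uₙ`, hence is `R`-linear. Its kernel is a complement of `V`.
-/

open Finset
open Finsupp (single)

section ConjAverage

variable {E G : Type*} [Ring E] [Group G] [Fintype G] (v : G →* Eˣ)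

noncomputable def conjAverage (f : E) : E := ∑ g, (v g : E) * f * ↑(v g)⁻¹

theorem commute_units_conjAverage (f : E) (h : G) : Commute (v h : E) (conjAverage v f) := by
  rw [Commute, SemiconjBy, conjAverage, mul_sum, sum_mul]
  refine Fintype.sum_equiv (Equiv.mulLeft h) _ _ fun g => ?_
  simp only [Equiv.coe_mulLeft, map_mul, mul_inv_rev, Units.val_mul, mul_assoc, Units.inv_mul,
    mul_one]

theorem commute_conjAverage {a f : E} (ha : ∀ g, Commute (↑(v g)⁻¹ * a * v g) f) :
    Commute a (conjAverage v f) := by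
  refine Commute.sum_right _ _ _ fun g _ => ?_
  calc a * (v g * f * ↑(v g)⁻¹) = v g * ((↑(v g)⁻¹ * a * v g) * f) * ↑(v g)⁻¹ := by
        simp only [mul_assoc, Units.mul_inv_cancel_left]
    _ = v g * f * ↑(v g)⁻¹ * a := by
        rw [(ha g).eq]; simp only [mul_assoc, Units.mul_inv, mul_one]

end ConjAverage

section Module
variable {R M G : Type*} [Ring R] [AddCommGroup M] [Module R M] [Group G] [Fintype G]

local notation "ρ" => Module.toAddMonoidEnd R M

theorem exists_isProj_forall_commute (A : Subring R) [IsSemisimpleRing A] (V : Submodule R M) :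
    ∃ f : AddMonoid.End M, LinearMap.IsProj V f ∧ ∀ a ∈ A, Commute (ρ a) f := by
  obtain ⟨W, hW⟩ := exists_isCompl (V.restrictScalars A)
  let f := (V.restrictScalars A).projection W hW
  refine ⟨f.toAddMonoidHom, ⟨fun x => Submodule.projection_apply_mem hW x,
    fun x hx => Submodule.projection_apply_of_mem_left hW (p := V.restrictScalars A) hx⟩,
    fun a ha => AddMonoidHom.ext fun x => (f.map_smul ⟨a, ha⟩ x).symm⟩

theorem isProj_smul_conjAverage (u : G →* Rˣ) (hG : IsUnit (Fintype.card G : R))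
    {V : Submodule R M} {f : AddMonoid.End M} (hf : LinearMap.IsProj V f) :
    LinearMap.IsProj V
      (ρ ↑hG.unit⁻¹ * conjAverage ((Units.map (ρ : R →* AddMonoid.End M)).comp u) f) := by
  have happly : ∀ x,
      (ρ ↑hG.unit⁻¹ * conjAverage ((Units.map (ρ : R →* AddMonoid.End M)).comp u) f) x =
        (↑hG.unit⁻¹ : R) • ∑ g, (u g : R) • f ((↑(u g)⁻¹ : R) • x) := fun x =>
    congrArg _ (AddMonoidHom.finsetSum_apply _ _ _)
  refine ⟨fun x => ?_, fun x hx => ?_⟩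
  · rw [happly]
    exact V.smul_mem _ (V.sum_mem fun g _ => V.smul_mem _ (hf.map_mem _))
  · have hterm : ∀ g, (u g : R) • f ((↑(u g)⁻¹ : R) • x) = x := fun g => by
      rw [hf.map_id _ (V.smul_mem _ hx), smul_smul, Units.mul_inv, one_smul]
    simp only [happly, hterm, sum_const, card_univ, ← Nat.cast_smul_eq_nsmul R, smul_smul,
      IsUnit.val_inv_mul, one_smul]

theorem exists_isCompl_of_isProj_of_commute {V : Submodule R M} {p : AddMonoid.End M}
    (hp : LinearMap.IsProj V p) (hcomm : ∀ r, Commute (ρ r) p) : ∃ W, IsCompl V W :=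
  let P : M →ₗ[R] M :=
    { toFun := p
      map_add' := map_add p
      map_smul' := fun r x => (DFunLike.congr_fun (hcomm r).eq x).symm }
  ⟨_, LinearMap.IsProj.isCompl (f := P) ⟨hp.map_mem, hp.map_id⟩⟩

theorem isSemisimpleModule_of_normalizing_units (A : Subring R) [IsSemisimpleRing A]
    (u : G →* Rˣ) (hA : ∀ g, ∀ a ∈ A, ↑(u g)⁻¹ * a * ↑(u g) ∈ A)
    (hgen : Subring.closure ((A : Set R) ∪ Set.range fun g => (u g : R)) = ⊤)
    (hG : IsUnit (Fintype.card G : R)) : IsSemisimpleModule R M := by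
  refine { exists_isCompl := fun V => ?_ }
  obtain ⟨f, hf, hfA⟩ := exists_isProj_forall_commute A V
  set v := (Units.map (ρ : R →* AddMonoid.End M)).comp u
  refine exists_isCompl_of_isProj_of_commute (isProj_smul_conjAverage u hG hf) fun r => ?_
  have hinv : Commute r ↑hG.unit⁻¹ :=
    .units_inv_right (by rw [IsUnit.unit_spec]; exact (Nat.cast_commute _ r).symm)
  refine (hinv.map ρ).mul_right ?_
  suffices h : ⊤ ≤ (Subring.centralizer {conjAverage v f}).comap ρ from
    (Subring.mem_centralizer_iff.1 (h (Subring.mem_top r)) _ rfl).symm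
  rw [← hgen, Subring.closure_le]
  rintro x (hx | ⟨g, rfl⟩) <;>
    simp only [SetLike.mem_coe, Subring.mem_comap, Subring.mem_centralizer_iff,
      Set.mem_singleton_iff, forall_eq]
  · refine (commute_conjAverage v fun g => ?_).eq.symm
    have hconj : ↑(v g)⁻¹ * ρ x * ↑(v g) = ρ (↑(u g)⁻¹ * x * u g) := by simp [v]
    exact hconj ▸ hfA _ (hA g x hx)
  · exact (commute_units_conjAverage v f g).eq.symm

end Module

def IsSmashProduct {k T N R : Type*} [Semiring k] [Mul T] [Group N] [DecidableEq T] [Semiring R]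
    [Module k R] (ψ : N →* MulAut T) (e : ((T × N) →₀ k) ≃ₗ[k] R) : Prop :=
  ∀ (t₁ t₂ : T) (n₁ n₂ : N) (c d : k),
    e (single (t₁, n₁) c) * e (single (t₂, n₂) d) =
      if t₁ = ψ n₁ t₂ then e (single (t₁, n₁ * n₂) (c * d)) else 0

namespace SmashProduct

variable {k T N R : Type*} [Semiring k] [Mul T] [Group N] [Fintype T] [Semiring R] [Module k R]
  (e : ((T × N) →₀ k) ≃ₗ[k] R)

noncomputable def ofGroup (n : N) : R := ∑ t, e (single (t, n) 1)

noncomputable def ofFun (f : T → k) : R := ∑ t, e (single (t, 1) (f t))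

end SmashProduct

namespace IsSmashProduct

open SmashProduct

section Semiring

variable {k T N R : Type*} [Semiring k] [Mul T] [Group N] [DecidableEq T]
  [Semiring R] [Module k R] {ψ : N →* MulAut T} {e : ((T × N) →₀ k) ≃ₗ[k] R}

theorem single_mul_single (h : IsSmashProduct ψ e) (t₁ t₂ : T) (n₁ n₂ : N) (c d : k) :
    e (single (t₁, n₁) c) * e (single (t₂, n₂) d) =
      if t₁ = ψ n₁ t₂ then e (single (t₁, n₁ * n₂) (c * d)) else 0 :=
  h t₁ t₂ n₁ n₂ c d

variable [Fintype T]

theorem ofGroup_mul_single (h : IsSmashProduct ψ e) (n : N) (s : T) (m : N) (c : k) :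
    ofGroup e n * e (single (s, m) c) = e (single (ψ n s, n * m) c) := by
  simp only [ofGroup, sum_mul, h.single_mul_single, one_mul, Fintype.sum_ite_eq']

theorem single_mul_ofGroup (h : IsSmashProduct ψ e) (s : T) (m n : N) (c : k) :
    e (single (s, m) c) * ofGroup e n = e (single (s, m * n) c) := by
  simp only [ofGroup, mul_sum, h.single_mul_single, mul_one, ← MulEquiv.symm_apply_eq,
    Fintype.sum_ite_eq]

theorem ofFun_mul_single (h : IsSmashProduct ψ e) (f : T → k) (s : T) (m : N) (c : k) :
    ofFun e f * e (single (s, m) c) = e (single (s, m) (f s * c)) := by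
  simp only [ofFun, sum_mul, h.single_mul_single, map_one, MulAut.one_apply, one_mul,
    Fintype.sum_ite_eq']

theorem ofGroup_one (h : IsSmashProduct ψ e) : ofGroup e 1 = (1 : R) := by
  have hleft : (AddMonoidHom.mulLeft (ofGroup e 1)).comp e.toAddMonoidHom = e.toAddMonoidHom :=
    Finsupp.addHom_ext fun p c => by simp [h.ofGroup_mul_single]
  simpa using DFunLike.congr_fun hleft (e.symm 1)

theorem ofGroup_mul (h : IsSmashProduct ψ e) (n m : N) :
    ofGroup e (n * m) = ofGroup e n * ofGroup e m := by
  symm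
  calc ofGroup e n * ofGroup e m = ∑ s, ofGroup e n * e (single (s, m) 1) := mul_sum _ _ _
    _ = ∑ s, e (single (ψ n s, n * m) 1) := by simp only [h.ofGroup_mul_single]
    _ = ofGroup e (n * m) := Fintype.sum_equiv (ψ n).toEquiv _ _ fun _ => rfl

noncomputable def unitsHom (h : IsSmashProduct ψ e) : N →* Rˣ :=
  MonoidHom.toHomUnits
    { toFun := ofGroup e
      map_one' := h.ofGroup_one
      map_mul' := h.ofGroup_mul }

theorem coe_unitsHom (h : IsSmashProduct ψ e) (n : N) : (h.unitsHom n : R) = ofGroup e n := rfl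

theorem ofFun_mul (h : IsSmashProduct ψ e) (f g : T → k) :
    ofFun e (f * g) = ofFun e f * ofFun e g := by
  symm
  calc ofFun e f * ofFun e g = ∑ s, ofFun e f * e (single (s, 1) (g s)) := mul_sum _ _ _
    _ = ofFun e (f * g) := by simp only [h.ofFun_mul_single]; rfl

noncomputable def ofFunRingHom (h : IsSmashProduct ψ e) : (T → k) →+* R where
  toFun := ofFun e
  map_one' := h.ofGroup_one
  map_mul' := h.ofFun_mul
  map_zero' := by simp [ofFun]
  map_add' f g := by simp [ofFun, Finsupp.single_add, sum_add_distrib]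

theorem ofGroup_inv_mul_ofFun_mul_ofGroup (h : IsSmashProduct ψ e) (n : N) (f : T → k) :
    ofGroup e n⁻¹ * ofFun e f * ofGroup e n = ofFun e (f ∘ ψ n) := by
  simp only [ofFun, sum_mul, mul_sum, h.single_mul_ofGroup, h.ofGroup_mul_single]
  exact Fintype.sum_equiv (ψ n).symm.toEquiv _ _ fun t => by simp

theorem single_eq_ofFun_mul_ofGroup (h : IsSmashProduct ψ e) (t : T) (n : N) (c : k) :
    e (single (t, n) c) = ofFun e (Pi.single t c) * ofGroup e n := by
  simp only [ofGroup, mul_sum, h.ofFun_mul_single, mul_one]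
  rw [Fintype.sum_eq_single t fun s hs => by simp [hs]]
  simp

end Semiring

section Ring

variable {k T N R : Type*} [Ring k] [Mul T] [Group N] [Fintype T] [DecidableEq T]
  [Ring R] [Module k R] {ψ : N →* MulAut T} {e : ((T × N) →₀ k) ≃ₗ[k] R}

theorem units_inv_mul_mul_units_mem_range (h : IsSmashProduct ψ e) (n : N) {a : R}
    (ha : a ∈ h.ofFunRingHom.range) :
    ↑(h.unitsHom n)⁻¹ * a * ↑(h.unitsHom n) ∈ h.ofFunRingHom.range := by
  obtain ⟨f, rfl⟩ := ha
  rw [← map_inv, coe_unitsHom, coe_unitsHom]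
  exact ⟨f ∘ ψ n, (h.ofGroup_inv_mul_ofFun_mul_ofGroup n f).symm⟩

theorem closure_range_union_range_unitsHom (h : IsSmashProduct ψ e) :
    Subring.closure ((h.ofFunRingHom.range : Set R) ∪ Set.range fun n => (h.unitsHom n : R)) =
      ⊤ := by
  refine eq_top_iff.2 fun r _ => ?_
  rw [← e.apply_symm_apply r]
  induction e.symm r using Finsupp.induction_linear with
  | zero => rw [map_zero]; exact Subring.zero_mem _
  | add f g hf hg => rw [map_add]; exact Subring.add_mem _ hf hg
  | single p c =>
    rw [h.single_eq_ofFun_mul_ofGroup]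
    exact Subring.mul_mem _ (Subring.subset_closure (.inl ⟨_, rfl⟩))
      (Subring.subset_closure (.inr ⟨p.2, rfl⟩))

end Ring

end IsSmashProduct

/-- Let `k` be a field, `N`, `T` finite groups with an action `ψ : N → Aut T`, and let `R` be
the smash product algebra `k[T] ⋊ kN`, i.e. any `k`-algebra with `k`-basis indexed by
`T × N` (a `k`-linear equivalence `e : (T × N →₀ k) ≃ R`) whose multiplication satisfies
`(e_{t₁} ⊗ n₁)(e_{t₂} ⊗ n₂) = δ_{t₁, ψ(n₁)(t₂)} e_{t₁} ⊗ n₁n₂`. If `char k` does not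
divide `|N|`, then `R` is a semisimple `k`-algebra. -/
theorem smash_product_semisimple (k : Type*) [Field k]
    (T N : Type*) [Group T] [Group N] [Fintype T] [Fintype N] [DecidableEq T]
    (ψ : N →* MulAut T)
    (R : Type*) [Ring R] [Algebra k R] (e : ((T × N) →₀ k) ≃ₗ[k] R)
    (hmul : ∀ (t₁ t₂ : T) (n₁ n₂ : N) (c d : k),
      e (Finsupp.single (t₁, n₁) c) * e (Finsupp.single (t₂, n₂) d) =
        if t₁ = ψ n₁ t₂ then e (Finsupp.single (t₁, n₁ * n₂) (c * d)) else 0)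
    (hchar : ¬ (ringChar k ∣ Fintype.card N)) :
    IsSemisimpleRing R := by
  have h : IsSmashProduct ψ e := hmul
  have : IsSemisimpleRing h.ofFunRingHom.range :=
    h.ofFunRingHom.rangeRestrict.isSemisimpleRing_of_surjective
      h.ofFunRingHom.rangeRestrict_surjective
  have hN : IsUnit (Fintype.card N : R) := by
    have hk : IsUnit (Fintype.card N : k) := Ne.isUnit fun h0 => hchar ((ringChar.spec k _).1 h0)
    simpa using hk.map (algebraMap k R)
  exact isSemisimpleModule_of_normalizing_units _ h.unitsHom
    (fun n _ ha => h.units_inv_mul_mul_units_mem_range n ha)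
    h.closure_range_union_range_unitsHom hN
end

section
/- Let k be a field, N and T finite groups with an action ψ : N → Aut(T), and let t_1, …, t_m be representatives of the N-orbits on T. Then the smash product algebra k[T] ⋊ kN is isomorphic as a k-algebra to ⊕_{i=1}^m M_{n_i}(k S_i), where S_i = Stab_N(t_i) and n_i = [N : S_i] is the size of the orbit of t_i. -/
/-!
Read `(x, n) ∈ T × N` as an arrow `(ψ n)⁻¹ x ⟶ x` of the action groupoid of `N` on `T`: the
multiplication rule says that the basis `e (single (x, n) 1)` multiplies like these arrows, a
product of non-composable arrows being zero. Fix representatives `g_a` of the cosets of `Sᵢ`; the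
orbit of `tᵢ` consists of the points `g_a tᵢ`, and every arrow inside it is uniquely of the form
`g_a s g_b⁻¹ : g_b tᵢ ⟶ g_a tᵢ` with `s ∈ Sᵢ`. Labelling this arrow by the matrix unit `E_ab ⊗ s`
matches the basis of the smash product with the standard basis of `∏ᵢ M_{nᵢ}(k Sᵢ)`, and the
multiplication tables agree because `(g_a s g_b⁻¹)(g_b s' g_c⁻¹) = g_a (s s') g_c⁻¹`.
-/

/-- The stabilizer of `t ∈ T` in `N`, for an action `ψ : N → Aut T`. -/
def smashStabilizer {N T : Type*} [Group N] [Group T] (ψ : N →* MulAut T) (t : T) :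
    Subgroup N where
  carrier := {n | ψ n t = t}
  one_mem' := by simp
  mul_mem' := by
    intro a b ha hb
    simp only [Set.mem_setOf_eq, map_mul, MulAut.mul_apply] at *
    rw [hb, ha]
  inv_mem' := by
    intro a ha
    simp only [Set.mem_setOf_eq, map_inv] at *
    exact (MulEquiv.symm_apply_eq (ψ a)).2 ha.symm


open Module

namespace Module.Basis

variable {ι k A B : Type*} [CommSemiring k] [Semiring A] [Semiring B] [Algebra k A] [Algebra k B]

noncomputable def algEquivOfMul (b : Basis ι k A) (b' : Basis ι k B)
    (h : ∀ i j, b.equiv b' (.refl ι) (b i * b j) = b' i * b' j) : A ≃ₐ[k] B :=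
  let L := b.equiv b' (.refl ι)
  have map_mul : ∀ x y, L (x * y) = L x * L y := by
    refine (LinearMap.map_mul_iff (L : A →ₗ[k] B)).2 (b.ext fun i => b.ext fun j => ?_)
    simpa [L] using h i j
  AlgEquiv.ofLinearEquiv L (MulEquiv.mk L.toEquiv map_mul).map_one map_mul

end Module.Basis

section MatrixUnits

variable (k : Type*) [CommSemiring k] {ι : Type*} [Fintype ι] [DecidableEq ι]
  (n : ι → Type*) [∀ i, Fintype (n i)] [∀ i, DecidableEq (n i)]
  (G : ι → Type*) [∀ i, Group (G i)]

noncomputable def matrixUnitBasis :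
    Basis (Σ i, n i × n i × G i) k (Π i, Matrix (n i) (n i) (MonoidAlgebra k (G i))) :=
  Pi.basis fun i => (MonoidAlgebra.basis (G i) k).matrix (n i) (n i)

variable {k n G}

theorem matrixUnitBasis_apply (i : ι) (a b : n i) (g : G i) :
    matrixUnitBasis k n G ⟨i, a, b, g⟩ =
      Pi.single i (Matrix.single a b (MonoidAlgebra.single g 1)) := by
  simp [matrixUnitBasis]

theorem matrixUnitBasis_mul_same (i : ι) (a b c : n i) (g h : G i) :
    matrixUnitBasis k n G ⟨i, a, b, g⟩ * matrixUnitBasis k n G ⟨i, b, c, h⟩ =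
      matrixUnitBasis k n G ⟨i, a, c, g * h⟩ := by
  simp only [matrixUnitBasis_apply, ← Pi.single_mul, Matrix.single_mul_single_same,
    MonoidAlgebra.single_mul_single, one_mul]

theorem matrixUnitBasis_mul_of_ne {i j : ι} {a b : n i} {c d : n j} {g : G i} {h : G j}
    (hbc : (⟨i, b⟩ : Σ i, n i) ≠ ⟨j, c⟩) :
    matrixUnitBasis k n G ⟨i, a, b, g⟩ * matrixUnitBasis k n G ⟨j, c, d, h⟩ = 0 := by
  rw [matrixUnitBasis_apply, matrixUnitBasis_apply]
  by_cases hij : i = j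
  · subst hij
    have hbc : b ≠ c := fun hbc' => hbc (hbc' ▸ rfl)
    rw [← Pi.single_mul, Matrix.single_mul_single_of_ne _ a b c hbc, Pi.single_zero]
  · ext l : 1
    by_cases hl : l = i
    · subst hl; simp [Pi.single_eq_of_ne hij]
    · simp [Pi.single_eq_of_ne hl]

end MatrixUnits

namespace Subgroup

variable {N : Type*} [Group N] (S : Subgroup N) [S.FiniteIndex]

noncomputable def cosetRep (a : Fin S.index) : N :=
  ((Finite.equivFinOfCardEq S.index_eq_card.symm).symm a).out

theorem cosetRep_inv_mul_mem_iff {a b : Fin S.index} :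
    (S.cosetRep a)⁻¹ * S.cosetRep b ∈ S ↔ a = b := by
  rw [← QuotientGroup.eq, cosetRep, cosetRep, QuotientGroup.out_eq', QuotientGroup.out_eq',
    Equiv.apply_eq_iff_eq]

theorem exists_cosetRep_inv_mul_mem (n : N) : ∃ a, (S.cosetRep a)⁻¹ * n ∈ S :=
  ⟨Finite.equivFinOfCardEq S.index_eq_card.symm n, by
    rw [← QuotientGroup.eq, cosetRep, Equiv.symm_apply_apply, QuotientGroup.out_eq']⟩

end Subgroup

section SmashProduct

variable {N T ι : Type*} [Group N] [Group T] (ψ : N →* MulAut T)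

theorem mem_smashStabilizer {x : T} {n : N} : n ∈ smashStabilizer ψ x ↔ ψ n x = x := Iff.rfl

theorem apply_eq_apply_iff_inv_mul_mem_smashStabilizer {x : T} {n n' : N} :
    ψ n x = ψ n' x ↔ n⁻¹ * n' ∈ smashStabilizer ψ x := by
  rw [mem_smashStabilizer, map_mul, map_inv, MulAut.mul_apply, MulAut.inv_apply,
    MulEquiv.symm_apply_eq, eq_comm]

variable (t : ι → T)

abbrev SmashPointIndex : Type _ := Σ i, Fin (smashStabilizer ψ (t i)).index

abbrev SmashArrowIndex : Type _ :=
  Σ i, Fin (smashStabilizer ψ (t i)).index × Fin (smashStabilizer ψ (t i)).index ×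
    smashStabilizer ψ (t i)

variable [Finite N]

noncomputable def smashOrbitPoint (p : SmashPointIndex ψ t) : T :=
  ψ ((smashStabilizer ψ (t p.1)).cosetRep p.2) (t p.1)

variable {t}

theorem smashOrbitPoint_bijective (hreps : ∀ s : T, ∃! i, ∃ n : N, ψ n (t i) = s) :
    Function.Bijective (smashOrbitPoint ψ t) := by
  constructor
  · rintro ⟨i, a⟩ ⟨j, b⟩ h
    obtain rfl : i = j := (hreps _).unique ⟨_, rfl⟩ ⟨_, h.symm⟩
    rw [smashOrbitPoint, smashOrbitPoint, apply_eq_apply_iff_inv_mul_mem_smashStabilizer,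
      Subgroup.cosetRep_inv_mul_mem_iff] at h
    obtain rfl : a = b := h
    rfl
  · intro x
    obtain ⟨i, ⟨n, rfl⟩, -⟩ := hreps x
    obtain ⟨a, ha⟩ := (smashStabilizer ψ (t i)).exists_cosetRep_inv_mul_mem n
    exact ⟨⟨i, a⟩, (apply_eq_apply_iff_inv_mul_mem_smashStabilizer ψ).2 ha⟩

variable (t)

noncomputable def smashArrow (z : SmashArrowIndex ψ t) : T × N :=
  (smashOrbitPoint ψ t ⟨z.1, z.2.1⟩,
    (smashStabilizer ψ (t z.1)).cosetRep z.2.1 * z.2.2.2 *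
      ((smashStabilizer ψ (t z.1)).cosetRep z.2.2.1)⁻¹)

theorem smashArrow_fst (z : SmashArrowIndex ψ t) :
    (smashArrow ψ t z).1 = ψ (smashArrow ψ t z).2 (smashOrbitPoint ψ t ⟨z.1, z.2.2.1⟩) := by
  obtain ⟨i, a, b, s, hs⟩ := z
  rw [smashArrow, smashOrbitPoint, smashOrbitPoint, ← MulAut.mul_apply, ← map_mul,
    inv_mul_cancel_right, map_mul, MulAut.mul_apply, (mem_smashStabilizer ψ).1 hs]

theorem smashArrow_snd_mul_smashArrow_snd (i : ι) (a b c : Fin (smashStabilizer ψ (t i)).index)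
    (s s' : smashStabilizer ψ (t i)) :
    (smashArrow ψ t ⟨i, a, b, s⟩).2 * (smashArrow ψ t ⟨i, b, c, s'⟩).2 =
      (smashArrow ψ t ⟨i, a, c, s * s'⟩).2 := by
  simp only [smashArrow, Subgroup.coe_mul]
  group

variable {t}

theorem smashArrow_composable_iff (hreps : ∀ s : T, ∃! i, ∃ n : N, ψ n (t i) = s)
    (z w : SmashArrowIndex ψ t) :
    (smashArrow ψ t z).1 = ψ (smashArrow ψ t z).2 (smashArrow ψ t w).1 ↔
      (⟨z.1, z.2.2.1⟩ : SmashPointIndex ψ t) = ⟨w.1, w.2.1⟩ := by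
  rw [smashArrow_fst, (ψ _).injective.eq_iff]
  exact (smashOrbitPoint_bijective ψ hreps).1.eq_iff

theorem smashArrow_bijective (hreps : ∀ s : T, ∃! i, ∃ n : N, ψ n (t i) = s) :
    Function.Bijective (smashArrow ψ t) := by
  constructor
  · rintro ⟨i, a, b, s⟩ ⟨j, a', b', s'⟩ h
    obtain ⟨rfl, ha⟩ :=
      Sigma.mk.inj_iff.1 ((smashOrbitPoint_bijective ψ hreps).1 (congrArg Prod.fst h))
    obtain rfl := eq_of_heq ha
    have hsource : smashOrbitPoint ψ t ⟨i, b⟩ = smashOrbitPoint ψ t ⟨i, b'⟩ := by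
      have := smashArrow_fst ψ t ⟨i, a, b, s⟩
      rw [h, smashArrow_fst, (ψ _).injective.eq_iff] at this
      exact this.symm
    obtain rfl := eq_of_heq (Sigma.mk.inj_iff.1 ((smashOrbitPoint_bijective ψ hreps).1 hsource)).2
    obtain rfl : s = s' :=
      Subtype.ext (mul_left_cancel (mul_right_cancel (congrArg Prod.snd h)))
    rfl
  · rintro ⟨x, n⟩
    obtain ⟨⟨i, a⟩, rfl⟩ := (smashOrbitPoint_bijective ψ hreps).2 x
    obtain ⟨b, hb⟩ := (smashStabilizer ψ (t i)).exists_cosetRep_inv_mul_mem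
      (n⁻¹ * (smashStabilizer ψ (t i)).cosetRep a)
    refine ⟨⟨i, a, b, ((smashStabilizer ψ (t i)).cosetRep a)⁻¹ * n *
      (smashStabilizer ψ (t i)).cosetRep b, ?_⟩, ?_⟩
    · simpa [mul_assoc] using inv_mem hb
    · simp only [smashArrow, Prod.mk.injEq, true_and]
      group

variable {k R : Type*} [CommSemiring k] [Semiring R] [Algebra k R]
  (hreps : ∀ s : T, ∃! i, ∃ n : N, ψ n (t i) = s) (e : ((T × N) →₀ k) ≃ₗ[k] R)

noncomputable def smashBasis : Basis (SmashArrowIndex ψ t) k R :=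
  (Basis.ofRepr e.symm).reindex (Equiv.ofBijective _ (smashArrow_bijective ψ hreps)).symm

theorem smashBasis_apply (z : SmashArrowIndex ψ t) :
    smashBasis ψ hreps e z = e (Finsupp.single (smashArrow ψ t z) 1) := by
  simp [smashBasis]

variable {e} [DecidableEq T]
variable (hmul : ∀ (t₁ t₂ : T) (n₁ n₂ : N) (c d : k),
  e (Finsupp.single (t₁, n₁) c) * e (Finsupp.single (t₂, n₂) d) =
    if t₁ = ψ n₁ t₂ then e (Finsupp.single (t₁, n₁ * n₂) (c * d)) else 0)
include hmul

theorem smashBasis_mul_same (i : ι) (a b c : Fin (smashStabilizer ψ (t i)).index)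
    (s s' : smashStabilizer ψ (t i)) :
    smashBasis ψ hreps e ⟨i, a, b, s⟩ * smashBasis ψ hreps e ⟨i, b, c, s'⟩ =
      smashBasis ψ hreps e ⟨i, a, c, s * s'⟩ := by
  rw [smashBasis_apply, smashBasis_apply, hmul,
    if_pos ((smashArrow_composable_iff ψ hreps _ _).2 rfl), smashArrow_snd_mul_smashArrow_snd,
    one_mul, smashBasis_apply]
  rfl

theorem smashBasis_mul_of_ne {i j : ι} {a b : Fin (smashStabilizer ψ (t i)).index}
    {c d : Fin (smashStabilizer ψ (t j)).index} {s : smashStabilizer ψ (t i)}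
    {s' : smashStabilizer ψ (t j)}
    (hbc : (⟨i, b⟩ : SmashPointIndex ψ t) ≠ ⟨j, c⟩) :
    smashBasis ψ hreps e ⟨i, a, b, s⟩ * smashBasis ψ hreps e ⟨j, c, d, s'⟩ = 0 := by
  rw [smashBasis_apply, smashBasis_apply, hmul,
    if_neg ((smashArrow_composable_iff ψ hreps _ _).not.2 hbc)]

end SmashProduct

theorem smash_product_decomposition_general (k : Type*) [Field k]
    (T N : Type*) [Group T] [Group N] [Fintype N] [DecidableEq T]
    (ψ : N →* MulAut T)
    (R : Type*) [Ring R] [Algebra k R] (e : ((T × N) →₀ k) ≃ₗ[k] R)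
    (hmul : ∀ (t₁ t₂ : T) (n₁ n₂ : N) (c d : k),
      e (Finsupp.single (t₁, n₁) c) * e (Finsupp.single (t₂, n₂) d) =
        if t₁ = ψ n₁ t₂ then e (Finsupp.single (t₁, n₁ * n₂) (c * d)) else 0)
    (m : ℕ) (t : Fin m → T)
    (hreps : ∀ s : T, ∃! i : Fin m, ∃ n : N, ψ n (t i) = s) :
    Nonempty (R ≃ₐ[k] Π i : Fin m,
      Matrix (Fin ((smashStabilizer ψ (t i)).index)) (Fin ((smashStabilizer ψ (t i)).index))
        (MonoidAlgebra k (smashStabilizer ψ (t i)))) := by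
  refine ⟨(smashBasis ψ hreps e).algEquivOfMul
    (matrixUnitBasis k (fun i => Fin (smashStabilizer ψ (t i)).index)
      (fun i => smashStabilizer ψ (t i))) ?_⟩
  rintro ⟨i, a, b, s⟩ ⟨j, c, d, s'⟩
  by_cases hbc : (⟨i, b⟩ : SmashPointIndex ψ t) = ⟨j, c⟩
  · cases hbc
    rw [smashBasis_mul_same ψ hreps hmul, matrixUnitBasis_mul_same, Basis.equiv_apply]
    rfl
  · rw [smashBasis_mul_of_ne ψ hreps hmul hbc, matrixUnitBasis_mul_of_ne hbc, map_zero]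

/-- Let `k` be a field, `N` and `T` finite groups with an action `ψ : N → Aut T`, and let
`t 0, …, t (m-1)` be representatives of the `N`-orbits on `T`. Then the smash product
algebra `R = k[T] ⋊ kN` (any `k`-algebra realizing the smash product multiplication on the
basis indexed by `T × N`) is isomorphic as a `k`-algebra to
`⊕ᵢ M_{nᵢ}(k Sᵢ)`, where `Sᵢ = Stab_N(t i)` and `nᵢ = [N : Sᵢ]`. -/
theorem smash_product_decomposition (k : Type*) [Field k]
    (T N : Type*) [Group T] [Group N] [Fintype T] [Fintype N] [DecidableEq T]
    (ψ : N →* MulAut T)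
    (R : Type*) [Ring R] [Algebra k R] (e : ((T × N) →₀ k) ≃ₗ[k] R)
    (hmul : ∀ (t₁ t₂ : T) (n₁ n₂ : N) (c d : k),
      e (Finsupp.single (t₁, n₁) c) * e (Finsupp.single (t₂, n₂) d) =
        if t₁ = ψ n₁ t₂ then e (Finsupp.single (t₁, n₁ * n₂) (c * d)) else 0)
    (m : ℕ) (t : Fin m → T)
    (hreps : ∀ s : T, ∃! i : Fin m, ∃ n : N, ψ n (t i) = s) :
    Nonempty (R ≃ₐ[k] Π i : Fin m,
      Matrix (Fin ((smashStabilizer ψ (t i)).index)) (Fin ((smashStabilizer ψ (t i)).index))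
        (MonoidAlgebra k (smashStabilizer ψ (t i)))) :=
  smash_product_decomposition_general k T N ψ R e hmul m t hreps
end

section
/- Let G be a finite group, L a field with a G-action by field automorphisms, and α : G × G → L* a 2-cocycle (α(g,h)·α(gh,l) = g(α(h,l))·α(g,hl)) whose cohomology class has order m in H²(G, L*), so that there exists f : G → L* with α(g₁,g₂)^m = f(g₁)·g₁(f(g₂))·f(g₁g₂)^{-1}. Suppose K is a field extension of L with a compatible action of a group N surjecting onto G via π : N ↠ G (so h(x) = π(h)(x) for x ∈ L), and suppose K contains elements r_g for each g ∈ G with r_g^m = f(g). Then the function β : N × N → K* defined by β(h₁,h₂) = α(π(h₁),π(h₂)) · r_{π(h₁)}^{-1} · h₁(r_{π(h₂)}^{-1}) · r_{π(h₁h₂)} is a 2-cocycle on N with values in K*, and every value of β is an m-th root of unity. -/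
/-!
Write `δc(a, b) = c a · a(c b) · (c (ab))⁻¹`. Then `β` is the inflation of `α` to `N` times
`(δ(r ∘ π))⁻¹`; inflations, coboundaries, and products and inverses of cocycles are cocycles,
so `β` is one. Raising to the `m`-th power, `α^m = δf` and `(r ∘ π)^m = f ∘ π` give
`β^m = δ(f ∘ π) · (δ(f ∘ π))⁻¹ = 1`.
-/

namespace TwoCochain

variable {N G M M' : Type*} [Monoid N] [Monoid G] [CommGroup M] [CommGroup M']

def IsTwoCocycle (ρ : N → M →* M) (β : N → N → M) : Prop :=
  ∀ a b c, β a b * β (a * b) c = ρ a (β b c) * β a (b * c)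

def coboundary (ρ : N → M →* M) (c : N → M) (a b : N) : M :=
  c a * ρ a (c b) * (c (a * b))⁻¹

def inflation (φ : M →* M') (π : N →* G) (α : G → G → M) (a b : N) : M' :=
  φ (α (π a) (π b))

theorem IsTwoCocycle.mul {ρ : N → M →* M} {β β' : N → N → M}
    (hβ : IsTwoCocycle ρ β) (hβ' : IsTwoCocycle ρ β') :
    IsTwoCocycle ρ (fun a b => β a b * β' a b) := by
  intro a b c
  rw [map_mul, mul_mul_mul_comm, hβ, hβ', mul_mul_mul_comm]

theorem IsTwoCocycle.inv {ρ : N → M →* M} {β : N → N → M} (hβ : IsTwoCocycle ρ β) :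
    IsTwoCocycle ρ (fun a b => (β a b)⁻¹) := by
  intro a b c
  rw [map_inv, ← mul_inv, hβ, mul_inv]

theorem isTwoCocycle_coboundary {ρ : N → M →* M}
    (hρ : ∀ a b x, ρ (a * b) x = ρ a (ρ b x)) (c : N → M) : IsTwoCocycle ρ (coboundary ρ c) := by
  intro a b d
  simp only [coboundary, hρ, map_mul, map_inv]
  simp [mul_comm, mul_left_comm, mul_assoc]

theorem coboundary_pow {ρ : N → M →* M} (c : N → M) (n : ℕ) (a b : N) :
    coboundary ρ c a b ^ n = coboundary ρ (c ^ n) a b := by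
  simp only [coboundary, Pi.pow_apply, mul_pow, inv_pow, map_pow]

section Inflation

variable {ρ : G → M →* M} {ρ' : N → M' →* M'} {φ : M →* M'} {π : N →* G}

theorem IsTwoCocycle.inflation (hcompat : ∀ n x, ρ' n (φ x) = φ (ρ (π n) x))
    {α : G → G → M} (hα : IsTwoCocycle ρ α) : IsTwoCocycle ρ' (inflation φ π α) := by
  intro a b c
  simp only [TwoCochain.inflation, map_mul π, hcompat, ← map_mul φ]
  exact congrArg φ (hα _ _ _)

theorem inflation_coboundary (hcompat : ∀ n x, ρ' n (φ x) = φ (ρ (π n) x)) (c : G → M) :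
    inflation φ π (coboundary ρ c) = coboundary ρ' (φ ∘ c ∘ π) := by
  ext a b
  simp only [TwoCochain.inflation, coboundary, Function.comp_apply, map_mul, map_inv, hcompat]

end Inflation

end TwoCochain

open TwoCochain in
theorem finite_cocycle_inflation_general (G N : Type*) [Group G] [Group N]
    (L K : Type*) [Field L] [Field K] (ι : L →+* K)
    (π : N →* G)
    (σ : G →* (L ≃+* L)) (τ : N →* (K ≃+* K))
    (hcompat : ∀ (n : N) (x : L), τ n (ι x) = ι (σ (π n) x))
    (α : G → G → Lˣ)
    (hα : ∀ g h l : G, α g h * α (g * h) l =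
      Units.map (σ g).toRingHom.toMonoidHom (α h l) * α g (h * l))
    (m : ℕ) (f : G → Lˣ)
    (hf : ∀ g₁ g₂ : G, (α g₁ g₂) ^ m =
      f g₁ * Units.map (σ g₁).toRingHom.toMonoidHom (f g₂) * (f (g₁ * g₂))⁻¹)
    (r : G → Kˣ) (hr : ∀ g : G, (r g) ^ m = Units.map ι.toMonoidHom (f g)) :
    (∀ h₁ h₂ h₃ : N,
      (Units.map ι.toMonoidHom (α (π h₁) (π h₂)) * (r (π h₁))⁻¹ *
          Units.map (τ h₁).toRingHom.toMonoidHom (r (π h₂))⁻¹ * r (π (h₁ * h₂))) *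
        (Units.map ι.toMonoidHom (α (π (h₁ * h₂)) (π h₃)) * (r (π (h₁ * h₂)))⁻¹ *
          Units.map (τ (h₁ * h₂)).toRingHom.toMonoidHom (r (π h₃))⁻¹ * r (π (h₁ * h₂ * h₃))) =
      Units.map (τ h₁).toRingHom.toMonoidHom
          (Units.map ι.toMonoidHom (α (π h₂) (π h₃)) * (r (π h₂))⁻¹ *
            Units.map (τ h₂).toRingHom.toMonoidHom (r (π h₃))⁻¹ * r (π (h₂ * h₃))) *
        (Units.map ι.toMonoidHom (α (π h₁) (π (h₂ * h₃))) * (r (π h₁))⁻¹ *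
          Units.map (τ h₁).toRingHom.toMonoidHom (r (π (h₂ * h₃)))⁻¹ * r (π (h₁ * (h₂ * h₃))))) ∧
    (∀ h₁ h₂ : N,
      (Units.map ι.toMonoidHom (α (π h₁) (π h₂)) * (r (π h₁))⁻¹ *
          Units.map (τ h₁).toRingHom.toMonoidHom (r (π h₂))⁻¹ * r (π (h₁ * h₂))) ^ m = 1) := by
  let ρ : N → Kˣ →* Kˣ := fun n => Units.map (τ n).toRingHom.toMonoidHom
  let ρG : G → Lˣ →* Lˣ := fun g => Units.map (σ g).toRingHom.toMonoidHom
  let φ : Lˣ →* Kˣ := Units.map ι.toMonoidHom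
  let β : N → N → Kˣ := fun a b =>
    φ (α (π a) (π b)) * (r (π a))⁻¹ * ρ a (r (π b))⁻¹ * r (π (a * b))
  have hρ : ∀ a b x, ρ (a * b) x = ρ a (ρ b x) := fun a b x => by
    ext; simp [ρ, map_mul τ]
  have hcompat' : ∀ n x, ρ n (φ x) = φ (ρG (π n) x) := fun n x => Units.ext (hcompat n x)
  have hβ : β = fun a b => inflation φ π α a b * (coboundary ρ (r ∘ π) a b)⁻¹ := by
    ext1 a; ext1 b
    simp only [β, inflation, coboundary, Function.comp_apply, map_inv, mul_inv, inv_inv]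
    simp [mul_comm, mul_left_comm, mul_assoc]
  refine ⟨(?_ : IsTwoCocycle ρ β), fun a b => (?_ : β a b ^ m = 1)⟩
  · rw [hβ]
    exact (IsTwoCocycle.inflation hcompat' hα).mul (isTwoCocycle_coboundary hρ _).inv
  · have hrπ : (r ∘ π) ^ m = φ ∘ f ∘ π := funext fun n => hr (π n)
    have hαm : (fun g₁ g₂ => α g₁ g₂ ^ m) = coboundary ρG f := funext₂ hf
    rw [hβ, mul_pow, inv_pow, coboundary_pow, hrπ, ← inflation_coboundary hcompat', ← hαm]
    simp only [inflation, map_pow, mul_inv_cancel]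

/-- Let `G`, `N` be finite groups with a surjection `π : N ↠ G`, acting compatibly on fields
`L ⊆ K` (via `σ : G → Aut L`, `τ : N → Aut K`, with `τ n (ι x) = ι (σ (π n) x)`).
Let `α : G × G → Lˣ` be a 2-cocycle and suppose `α^m = ∂f` for some `f : G → Lˣ`, and
`K` contains elements `r g` with `(r g)^m = f g`. Then
`β(h₁,h₂) = α(π h₁, π h₂) · (r (π h₁))⁻¹ · h₁((r (π h₂))⁻¹) · r (π (h₁h₂))`
is a 2-cocycle on `N` with values in `Kˣ`, all of whose values are `m`-th roots of unity. -/
theorem finite_cocycle_inflation (G N : Type*) [Group G] [Finite G] [Group N] [Finite N]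
    (L K : Type*) [Field L] [Field K] (ι : L →+* K)
    (π : N →* G) (hπ : Function.Surjective π)
    (σ : G →* (L ≃+* L)) (τ : N →* (K ≃+* K))
    (hcompat : ∀ (n : N) (x : L), τ n (ι x) = ι (σ (π n) x))
    (α : G → G → Lˣ)
    (hα : ∀ g h l : G, α g h * α (g * h) l =
      Units.map (σ g).toRingHom.toMonoidHom (α h l) * α g (h * l))
    (m : ℕ) (hm : 0 < m) (f : G → Lˣ)
    (hf : ∀ g₁ g₂ : G, (α g₁ g₂) ^ m =
      f g₁ * Units.map (σ g₁).toRingHom.toMonoidHom (f g₂) * (f (g₁ * g₂))⁻¹)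
    (r : G → Kˣ) (hr : ∀ g : G, (r g) ^ m = Units.map ι.toMonoidHom (f g)) :
    (∀ h₁ h₂ h₃ : N,
      (Units.map ι.toMonoidHom (α (π h₁) (π h₂)) * (r (π h₁))⁻¹ *
          Units.map (τ h₁).toRingHom.toMonoidHom (r (π h₂))⁻¹ * r (π (h₁ * h₂))) *
        (Units.map ι.toMonoidHom (α (π (h₁ * h₂)) (π h₃)) * (r (π (h₁ * h₂)))⁻¹ *
          Units.map (τ (h₁ * h₂)).toRingHom.toMonoidHom (r (π h₃))⁻¹ * r (π (h₁ * h₂ * h₃))) =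
      Units.map (τ h₁).toRingHom.toMonoidHom
          (Units.map ι.toMonoidHom (α (π h₂) (π h₃)) * (r (π h₂))⁻¹ *
            Units.map (τ h₂).toRingHom.toMonoidHom (r (π h₃))⁻¹ * r (π (h₂ * h₃))) *
        (Units.map ι.toMonoidHom (α (π h₁) (π (h₂ * h₃))) * (r (π h₁))⁻¹ *
          Units.map (τ h₁).toRingHom.toMonoidHom (r (π (h₂ * h₃)))⁻¹ * r (π (h₁ * (h₂ * h₃))))) ∧
    (∀ h₁ h₂ : N,
      (Units.map ι.toMonoidHom (α (π h₁) (π h₂)) * (r (π h₁))⁻¹ *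
          Units.map (τ h₁).toRingHom.toMonoidHom (r (π h₂))⁻¹ * r (π (h₁ * h₂))) ^ m = 1) :=
  finite_cocycle_inflation_general G N L K ι π σ τ hcompat α hα m f hf r hr
end
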